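/- arXiv:1102.1906 — 6 statements merged into one kernel-verified Lean document; each statement's English description precedes it below -/
import Mathlib

section
/- Let K be a field with a valuation ν, and let μ be a valuation of K[x] extending ν. Let φ = Σ_{j=0}^{s} a_j φ₀^j where φ₀ is monic, deg a_j < deg φ₀ for j < s, a_s ∈ K (degree 0), and let μ' = [μ; μ'(φ₀)=γ] be an augmented valuation (μ'(f) = min_j (μ(f_j) + jγ) on φ₀-expansions, with γ > μ(φ₀)). If μ'(a_s φ₀^s) = μ'(φ), then φ is μ'-minimal: any polynomial g such that φ μ'-divides g (i.e. in_{μ'}(g) = in_{μ'}(hφ) for some h) satisfies deg_x g ≥ deg_x φ. -/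
open Polynomial Finset

namespace Stmt0Aux

variable {K : Type*} [Field K]

noncomputable def eC (φ₀ : Polynomial K) : ℕ → Polynomial K → Polynomial K
  | 0, f => f %ₘ φ₀
  | k+1, f => eC φ₀ k (f /ₘ φ₀)

@[simp] lemma eC_zero (φ₀ f : Polynomial K) : eC φ₀ 0 f = f %ₘ φ₀ := rfl
@[simp] lemma eC_succ (φ₀ : Polynomial K) (k : ℕ) (f : Polynomial K) :
    eC φ₀ (k+1) f = eC φ₀ k (f /ₘ φ₀) := rfl

lemma add_divByMonic' {φ₀ : Polynomial K} (hm : φ₀.Monic) (p q : Polynomial K) :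
    (p + q) /ₘ φ₀ = p /ₘ φ₀ + q /ₘ φ₀ := by
  refine (div_modByMonic_unique _ (p %ₘ φ₀ + q %ₘ φ₀) hm ⟨?_, ?_⟩).1
  · have h1 := modByMonic_add_div p φ₀
    have h2 := modByMonic_add_div q φ₀
    rw [mul_add]
    linear_combination h1 + h2
  · exact lt_of_le_of_lt (degree_add_le _ _)
      (max_lt (degree_modByMonic_lt _ hm) (degree_modByMonic_lt _ hm))

lemma eC_add {φ₀ : Polynomial K} (hm : φ₀.Monic) (k : ℕ) (p q : Polynomial K) :
    eC φ₀ k (p + q) = eC φ₀ k p + eC φ₀ k q := by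
  induction k generalizing p q with
  | zero => simp [add_modByMonic]
  | succ k ih => simp only [eC_succ, add_divByMonic' hm, ih]

lemma eC_zero_poly (φ₀ : Polynomial K) (k : ℕ) : eC φ₀ k 0 = 0 := by
  induction k with
  | zero => simp
  | succ k ih => simp [ih]

lemma eC_neg {φ₀ : Polynomial K} (hm : φ₀.Monic) (k : ℕ) (p : Polynomial K) :
    eC φ₀ k (-p) = -(eC φ₀ k p) := by
  have h := eC_add hm k p (-p)
  rw [add_neg_cancel, eC_zero_poly] at h
  exact eq_neg_of_add_eq_zero_left (by linear_combination -h)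

lemma eC_sum {φ₀ : Polynomial K} (hm : φ₀.Monic) (k : ℕ) {ι : Type*} (S : Finset ι)
    (F : ι → Polynomial K) : eC φ₀ k (∑ i ∈ S, F i) = ∑ i ∈ S, eC φ₀ k (F i) := by
  classical
  induction S using Finset.induction_on with
  | empty => simp [eC_zero_poly]
  | insert _ _ hnot ih => rename_i a S'
                          rw [Finset.sum_insert hnot, Finset.sum_insert hnot, eC_add hm, ih]

lemma eC_degree_lt {φ₀ : Polynomial K} (hm : φ₀.Monic) (k : ℕ) (f : Polynomial K) :
    (eC φ₀ k f).degree < φ₀.degree := by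
  induction k generalizing f with
  | zero => exact degree_modByMonic_lt _ hm
  | succ k ih => exact ih _

lemma eC_single {φ₀ : Polynomial K} (hm : φ₀.Monic) {b : Polynomial K}
    (hb : b.degree < φ₀.degree) (k n : ℕ) :
    eC φ₀ k (b * φ₀ ^ n) = if k = n then b else 0 := by
  induction n generalizing k with
  | zero =>
    rw [pow_zero, mul_one]
    cases k with
    | zero => simp [(modByMonic_eq_self_iff hm).mpr hb]
    | succ k =>
      rw [eC_succ, (divByMonic_eq_zero_iff hm).mpr hb, eC_zero_poly]
      simp
  | succ n ih =>
    cases k with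
    | zero =>
      rw [eC_zero, (modByMonic_eq_zero_iff_dvd hm).mpr ⟨b * φ₀ ^ n, by ring⟩]
      simp
    | succ k =>
      have hdiv : (b * φ₀ ^ (n+1)) /ₘ φ₀ = b * φ₀ ^ n := by
        have : b * φ₀ ^ (n+1) = φ₀ * (b * φ₀ ^ n) := by ring
        rw [this, mul_divByMonic_cancel_left _ hm]
      rw [eC_succ, hdiv, ih]
      simp

lemma qdeg {φ₀ : Polynomial K} (hm : φ₀.Monic) {p r : Polynomial K}
    (hp : p.degree < φ₀.degree) (hr : r.degree < φ₀.degree) :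
    ((p * r) /ₘ φ₀).degree < φ₀.degree := by
  by_cases h0 : (p * r) /ₘ φ₀ = 0
  · rw [h0, degree_zero]
    exact Ne.bot_lt fun h => hm.ne_zero (degree_eq_bot.1 h)
  · have hpr : p * r ≠ 0 := by
      intro h; apply h0; rw [h, zero_divByMonic]
    have hp0 : p ≠ 0 := fun h => hpr (by rw [h, zero_mul])
    have hr0 : r ≠ 0 := fun h => hpr (by rw [h, mul_zero])
    have h1 : ((p * r) /ₘ φ₀).natDegree = (p * r).natDegree - φ₀.natDegree :=
      natDegree_divByMonic _ hm
    have h2 : (p * r).natDegree = p.natDegree + r.natDegree := natDegree_mul hp0 hr0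
    have h3 : p.natDegree < φ₀.natDegree := natDegree_lt_natDegree hp0 hp
    have h4 : r.natDegree < φ₀.natDegree := natDegree_lt_natDegree hr0 hr
    rw [degree_eq_natDegree h0, degree_eq_natDegree hm.ne_zero]
    have : ((p * r) /ₘ φ₀).natDegree < φ₀.natDegree := by omega
    exact_mod_cast this

lemma deg_div_lt {φ₀ : Polynomial K} (hm : φ₀.Monic) (hd : 0 < φ₀.natDegree)
    {f : Polynomial K} {k : ℕ} (h : f.degree < (((k+1) * φ₀.natDegree : ℕ) : WithBot ℕ)) :
    (f /ₘ φ₀).degree < ((k * φ₀.natDegree : ℕ) : WithBot ℕ) := by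
  by_cases h0 : f /ₘ φ₀ = 0
  · rw [h0, degree_zero]; exact WithBot.bot_lt_coe _
  · have hf0 : f ≠ 0 := fun h => h0 (by rw [h, zero_divByMonic])
    have h1 : (f /ₘ φ₀).natDegree = f.natDegree - φ₀.natDegree := natDegree_divByMonic _ hm
    have h2 : ¬ f.degree < φ₀.degree := fun hcon => h0 ((divByMonic_eq_zero_iff hm).mpr hcon)
    have h3 : φ₀.natDegree ≤ f.natDegree := by
      by_contra h4; push_neg at h4; apply h2
      rw [degree_eq_natDegree hf0, degree_eq_natDegree hm.ne_zero]
      exact_mod_cast h4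
    have h5 : f.natDegree < (k+1) * φ₀.natDegree := by
      rw [degree_eq_natDegree hf0] at h
      exact_mod_cast h
    rw [degree_eq_natDegree h0]
    have h6 : (k+1) * φ₀.natDegree = k * φ₀.natDegree + φ₀.natDegree := by ring
    have : (f /ₘ φ₀).natDegree < k * φ₀.natDegree := by omega
    exact_mod_cast this

lemma eC_eq_zero_of_degree_lt {φ₀ : Polynomial K} (hm : φ₀.Monic) (hd : 0 < φ₀.natDegree)
    {k : ℕ} {f : Polynomial K} (h : f.degree < ((k * φ₀.natDegree : ℕ) : WithBot ℕ)) :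
    eC φ₀ k f = 0 := by
  induction k generalizing f with
  | zero =>
    have : f = 0 := by simpa using h
    rw [this, eC_zero_poly]
  | succ k ih =>
    rw [eC_succ]
    exact ih (deg_div_lt hm hd h)

lemma recon {φ₀ : Polynomial K} (hm : φ₀.Monic) (hd : 0 < φ₀.natDegree)
    {m : ℕ} {f : Polynomial K} (h : f.degree < (((m+1) * φ₀.natDegree : ℕ) : WithBot ℕ)) :
    f = ∑ j ∈ range (m+1), eC φ₀ j f * φ₀ ^ j := by
  induction m generalizing f with
  | zero =>
    rw [Finset.sum_range_one, eC_zero, pow_zero, mul_one]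
    refine ((modByMonic_eq_self_iff hm).mpr ?_).symm
    rw [degree_eq_natDegree hm.ne_zero]
    simpa using h
  | succ m ih =>
    have hdiv : (f /ₘ φ₀).degree < (((m+1) * φ₀.natDegree : ℕ) : WithBot ℕ) :=
      deg_div_lt hm hd h
    have key : ∑ j ∈ range (m+1), eC φ₀ j (f /ₘ φ₀) * φ₀ ^ (j+1) = φ₀ * (f /ₘ φ₀) := by
      conv_rhs => rw [ih hdiv]
      rw [Finset.mul_sum]
      apply Finset.sum_congr rfl
      intro j _
      ring
    rw [Finset.sum_range_succ']
    simp only [eC_succ, eC_zero, pow_zero, mul_one]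
    rw [key, add_comm]
    exact (modByMonic_add_div f φ₀).symm

lemma deg_sum_lt {φ₀ : Polynomial K} (hm : φ₀.Monic) (hd : 0 < φ₀.natDegree)
    {m : ℕ} {b : ℕ → Polynomial K} (h : ∀ j ∈ range m, (b j).degree < φ₀.degree) :
    (∑ j ∈ range m, b j * φ₀ ^ j).degree < ((m * φ₀.natDegree : ℕ) : WithBot ℕ) := by
  refine lt_of_le_of_lt (degree_sum_le _ _) ?_
  rw [Finset.sup_lt_iff (by exact WithBot.bot_lt_coe _)]
  intro j hj
  by_cases hb0 : b j = 0
  · rw [hb0, zero_mul, degree_zero]; exact WithBot.bot_lt_coe _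
  · rw [degree_mul, degree_eq_natDegree hb0, degree_eq_natDegree (pow_ne_zero j hm.ne_zero),
      natDegree_pow]
    have h1 : (b j).natDegree < φ₀.natDegree := natDegree_lt_natDegree hb0 (h j hj)
    have h2 : j < m := mem_range.mp hj
    have h3 : (j+1) * φ₀.natDegree ≤ m * φ₀.natDegree := Nat.mul_le_mul_right _ (by omega)
    have h4 : (j+1) * φ₀.natDegree = j * φ₀.natDegree + φ₀.natDegree := by ring
    have h5 : (b j).natDegree + j * φ₀.natDegree < m * φ₀.natDegree := by omega
    exact_mod_cast h5

end Stmt0Aux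

/-- If `φ = Σ_{j≤s} a_j φ₀^j` with `deg a_j < deg φ₀` for `j < s`, `a_s` a nonzero
constant, and `μ' = [μ; μ'(φ₀) = γ]` is the augmented valuation with
`μ'(a_s φ₀^s) = μ'(φ)`, then `φ` is `μ'`-minimal. -/
theorem stmt0 {K : Type*} [Field K] {Γ : Type*} [AddCommGroup Γ] [LinearOrder Γ] [IsOrderedAddMonoid Γ]
    (μ μ' : Polynomial K → WithTop Γ) (γ : Γ)
    (hμ0 : ∀ f, μ f = ⊤ ↔ f = 0)
    (hμm : ∀ f g, μ (f * g) = μ f + μ g)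
    (hμa : ∀ f g, min (μ f) (μ g) ≤ μ (f + g))
    (hμ'0 : ∀ f, μ' f = ⊤ ↔ f = 0)
    (hμ'm : ∀ f g, μ' (f * g) = μ' f + μ' g)
    (hμ'a : ∀ f g, min (μ' f) (μ' g) ≤ μ' (f + g))
    (φ₀ : Polynomial K) (hφ₀ : φ₀.Monic) (hγ : μ φ₀ < (γ : WithTop Γ))
    (haug : ∀ (m : ℕ) (f : ℕ → Polynomial K), (∀ j, (f j).degree < φ₀.degree) →
      μ' (∑ j ∈ range (m + 1), f j * φ₀ ^ j)
        = (range (m + 1)).inf fun j => μ (f j) + ((j • γ : Γ) : WithTop Γ))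
    (s : ℕ) (a : ℕ → Polynomial K)
    (hdeg : ∀ j < s, (a j).degree < φ₀.degree)
    (c : K) (hc : c ≠ 0) (has : a s = C c)
    (φ : Polynomial K) (hφ : φ = ∑ j ∈ range (s + 1), a j * φ₀ ^ j)
    (hval : μ' (a s * φ₀ ^ s) = μ' φ) :
    ∀ g h : Polynomial K, g ≠ 0 → (g = h * φ ∨ μ' g < μ' (g - h * φ)) →
      φ.degree ≤ g.degree := by
  classical
  intro g h₁ hg0 hcase
  have hφ₀0 : φ₀ ≠ 0 := hφ₀.ne_zero
  rcases hcase with hcase | hlt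
  · -- g = h₁ * φ
    have hh0 : h₁ ≠ 0 := by
      rintro rfl
      rw [zero_mul] at hcase
      exact hg0 hcase
    rw [hcase, degree_mul]
    calc degree φ = 0 + degree φ := (zero_add _).symm
      _ ≤ degree h₁ + degree φ := add_le_add_left (zero_le_degree_iff.mpr hh0) _
  -- trivial case s = 0
  rcases Nat.eq_zero_or_pos s with hs0 | hs1
  · subst hs0
    rw [Finset.sum_range_one, pow_zero, mul_one] at hφ
    rw [hφ, has]
    exact le_trans degree_C_le (zero_le_degree_iff.mpr hg0)
  -- trivial case deg φ₀ = 0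
  by_cases hd0 : φ₀.natDegree = 0
  · have hφ1 : φ₀ = 1 := hφ₀.natDegree_eq_zero.mp hd0
    have hφC : φ = C c := by
      rw [hφ, Finset.sum_range_succ, has, hφ1, one_pow, mul_one]
      rw [Finset.sum_eq_zero, zero_add]
      intro j hj
      have hja := hdeg j (mem_range.mp hj)
      rw [hφ1, degree_one] at hja
      have : a j = 0 := by
        rw [← degree_eq_bot]
        exact Nat.WithBot.lt_zero_iff.mp hja
      rw [this, zero_mul]
    rw [hφC]
    exact le_trans degree_C_le (zero_le_degree_iff.mpr hg0)
  have hd : 0 < φ₀.natDegree := Nat.pos_of_ne_zero hd0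
  obtain ⟨s', rfl⟩ : ∃ s', s = s' + 1 := ⟨s - 1, by omega⟩
  have hbotlt : (⊥ : WithBot ℕ) < degree φ₀ := Ne.bot_lt fun hh => hφ₀0 (degree_eq_bot.1 hh)
  have hdpos : (0 : WithBot ℕ) < degree φ₀ := natDegree_pos_iff_degree_pos.mp hd
  have hadeg : ∀ j, j < s' + 1 + 1 → (a j).degree < φ₀.degree := by
    intro j hj
    rcases Nat.lt_succ_iff_lt_or_eq.mp hj with hj' | rfl
    · exact hdeg j hj'
    · rw [has]; exact lt_of_le_of_lt degree_C_le hdpos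
  have hfin : ∀ p : Polynomial K, p ≠ 0 → μ' p ≠ ⊤ := fun p hp hh => hp ((hμ'0 p).mp hh)
  -- μ' 1 = 0, μ 1 = 0
  have honegen : ∀ ν : Polynomial K → WithTop Γ, (∀ f, ν f = ⊤ ↔ f = 0) →
      (∀ f g, ν (f * g) = ν f + ν g) → ν 1 = 0 := by
    intro ν hν0 hνm
    have hne : ν (1 : Polynomial K) ≠ ⊤ := fun hh => one_ne_zero ((hν0 1).mp hh)
    obtain ⟨x, hx⟩ := WithTop.ne_top_iff_exists.mp hne
    have h1 := hνm 1 1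
    rw [mul_one, ← hx] at h1
    have h2 : x = x + x := by exact_mod_cast h1
    have h3 : x = 0 := add_eq_left.mp h2.symm
    rw [← hx, h3, WithTop.coe_zero]
  have hμ'one : μ' 1 = 0 := honegen μ' hμ'0 hμ'm
  have hμone : μ 1 = 0 := honegen μ hμ0 hμm
  have hμ'negone : μ' (-1 : Polynomial K) = 0 := by
    have hne : μ' (-1 : Polynomial K) ≠ ⊤ := hfin _ (neg_ne_zero.mpr one_ne_zero)
    obtain ⟨x, hx⟩ := WithTop.ne_top_iff_exists.mp hne
    have h1 := hμ'm (-1) (-1)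
    rw [neg_one_mul, neg_neg, hμ'one, ← hx] at h1
    have h2 : x + x = 0 := by exact_mod_cast h1.symm
    have h3 : x = 0 := by
      by_contra hxne
      rcases lt_or_gt_of_ne hxne with hcc | hcc
      · have h4 : x + x < 0 + 0 := add_lt_add hcc hcc
        rw [add_zero, h2] at h4
        exact absurd h4 (lt_irrefl _)
      · have h4 : (0 : Γ) + 0 < x + x := add_lt_add hcc hcc
        rw [add_zero, h2] at h4
        exact absurd h4 (lt_irrefl _)
    rw [← hx, h3, WithTop.coe_zero]
  have hμ'neg : ∀ p : Polynomial K, μ' (-p) = μ' p := by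
    intro p
    rw [← neg_one_mul, hμ'm, hμ'negone, zero_add]
  have hstrict : ∀ p q : Polynomial K, μ' p < μ' q → μ' (p + q) = μ' p := by
    intro p q hpq
    have hge : μ' p ≤ μ' (p + q) := by
      have := hμ'a p q
      rwa [min_eq_left hpq.le] at this
    have hle : μ' (p + q) ≤ μ' p := by
      by_contra hcon
      push_neg at hcon
      have h3 := hμ'a (p + q) (-q)
      rw [add_neg_cancel_right, hμ'neg] at h3
      exact absurd h3 (not_le_of_gt (lt_min hcon hpq))
    exact le_antisymm hle hge
  have hlow : ∀ r : Polynomial K, r.degree < φ₀.degree → μ' r = μ r := by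
    intro r hr
    have h1 := haug 0 (fun _ => r) (fun _ => hr)
    simpa [Finset.sum_range_one, Finset.range_one, zero_nsmul] using h1
  have hμ'φ₀ : μ' φ₀ = (γ : WithTop Γ) := by
    have hfdeg : ∀ j, ((fun j => if j = 1 then (1 : Polynomial K) else 0) j).degree
        < φ₀.degree := by
      intro j
      by_cases hj : j = 1
      · simpa [hj] using hdpos
      · simpa [hj] using hbotlt
    have h1 := haug 1 _ hfdeg
    have h2 : ∑ j ∈ range (1 + 1), (if j = 1 then (1 : Polynomial K) else 0) * φ₀ ^ j = φ₀ := by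
      rw [Finset.sum_range_succ, Finset.sum_range_one]
      norm_num
    rw [h2] at h1
    rw [h1, Finset.range_add_one, Finset.inf_insert, Finset.range_one, Finset.inf_singleton]
    norm_num [hμone, (hμ0 0).mpr rfl]
  have hpow : ∀ t : ℕ, μ' (φ₀ ^ t) = ((t • γ : Γ) : WithTop Γ) := by
    intro t
    induction t with
    | zero => rw [pow_zero, hμ'one, zero_nsmul, WithTop.coe_zero]
    | succ n ih => rw [pow_succ, hμ'm, ih, hμ'φ₀, succ_nsmul, WithTop.coe_add]
  have hkey : ∀ (f : Polynomial K) (k : ℕ),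
      μ' f ≤ μ' (Stmt0Aux.eC φ₀ k f) + ((k • γ : Γ) : WithTop Γ) := by
    intro f k
    by_cases hf : f = 0
    · rw [hf, Stmt0Aux.eC_zero_poly, (hμ'0 0).mpr rfl, top_add]
    · have hm1 : f.natDegree < (k + f.natDegree + 1) * φ₀.natDegree := by
        have h1 : (k + f.natDegree + 1) * 1 ≤ (k + f.natDegree + 1) * φ₀.natDegree :=
          Nat.mul_le_mul_left _ hd
        omega
      have hdegf : f.degree < (((k + f.natDegree + 1) * φ₀.natDegree : ℕ) : WithBot ℕ) :=
        lt_of_le_of_lt degree_le_natDegree (by exact_mod_cast hm1)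
      have hrec := Stmt0Aux.recon hφ₀ hd hdegf
      have h2 := haug (k + f.natDegree) (fun j => Stmt0Aux.eC φ₀ j f)
        (fun j => Stmt0Aux.eC_degree_lt hφ₀ j f)
      rw [← hrec] at h2
      rw [h2]
      have hkmem : k ∈ range (k + f.natDegree + 1) := mem_range.mpr (by omega)
      refine le_trans (Finset.inf_le hkmem) (le_of_eq ?_)
      show μ (Stmt0Aux.eC φ₀ k f) + ((k • γ : Γ) : WithTop Γ) = _
      rw [hlow _ (Stmt0Aux.eC_degree_lt hφ₀ k f)]
  have hμ'φ : μ' φ = μ' (C c) + (((s' + 1) • γ : Γ) : WithTop Γ) := by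
    rw [← hval, has, hμ'm, hpow]
  have hCcfin : μ' (C c) ≠ ⊤ := hfin _ (by simp [hc])
  have hφne : φ ≠ 0 := by
    intro hh
    rw [hh, (hμ'0 0).mpr rfl] at hμ'φ
    exact (WithTop.add_ne_top.mpr ⟨hCcfin, WithTop.coe_ne_top⟩) hμ'φ.symm
  have hφfin : μ' φ ≠ ⊤ := hfin φ hφne
  -- MAIN LEMMA: value of the top expansion coefficient of u * φ₀^t * φ
  have main : ∀ n (u : Polynomial K), u.natDegree ≤ n → u ≠ 0 → u.degree < φ₀.degree →
      ∀ t : ℕ,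
      μ' (Stmt0Aux.eC φ₀ (t + (s' + 1)) (u * φ₀ ^ t * φ)) + (((t + (s' + 1)) • γ : Γ) : WithTop Γ)
        ≤ μ' u + ((t • γ : Γ) : WithTop Γ) + μ' φ := by
    intro n
    induction n using Nat.strong_induction_on with
    | _ n ih =>
    intro u hun hu0 hudeg t
    have hcomp : Stmt0Aux.eC φ₀ (t + (s' + 1)) (u * φ₀ ^ t * φ)
        = u * C c + (u * a s') /ₘ φ₀ := by
      have hexp : u * φ₀ ^ t * φ = ∑ j ∈ range (s' + 1 + 1), (u * a j) * φ₀ ^ (t + j) := by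
        rw [hφ, Finset.mul_sum]
        refine Finset.sum_congr rfl ?_
        intro j _
        rw [pow_add]
        ring
      rw [hexp, Stmt0Aux.eC_sum hφ₀]
      have hterm : ∀ j ∈ range (s' + 1 + 1),
          Stmt0Aux.eC φ₀ (t + (s' + 1)) ((u * a j) * φ₀ ^ (t + j)) =
          (if s' + 1 = j then (u * a j) %ₘ φ₀ else 0)
            + (if s' = j then (u * a j) /ₘ φ₀ else 0) := by
        intro j hj
        have hsplit : (u * a j) * φ₀ ^ (t + j)
            = ((u * a j) %ₘ φ₀) * φ₀ ^ (t + j) + ((u * a j) /ₘ φ₀) * φ₀ ^ (t + j + 1) := by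
          conv_lhs => rw [← modByMonic_add_div (u * a j) φ₀]
          rw [pow_succ]
          ring
        have hqd : ((u * a j) /ₘ φ₀).degree < φ₀.degree :=
          Stmt0Aux.qdeg hφ₀ hudeg (hadeg j (mem_range.mp hj))
        rw [hsplit, Stmt0Aux.eC_add hφ₀,
          Stmt0Aux.eC_single hφ₀ (degree_modByMonic_lt _ hφ₀) _ _,
          Stmt0Aux.eC_single hφ₀ hqd _ _]
        have e1 : (t + (s' + 1) = t + j) = (s' + 1 = j) := propext (by omega)
        have e2 : (t + (s' + 1) = t + j + 1) = (s' = j) := propext (by omega)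
        simp only [e1, e2]
      rw [Finset.sum_congr rfl hterm, Finset.sum_add_distrib,
        Finset.sum_ite_eq (range (s' + 1 + 1)) (s' + 1), Finset.sum_ite_eq (range (s' + 1 + 1)) s',
        if_pos (mem_range.mpr (by omega)), if_pos (mem_range.mpr (by omega)), has]
      congr 1
      refine (modByMonic_eq_self_iff hφ₀).mpr ?_
      rw [degree_mul, degree_C hc, add_zero]
      exact hudeg
    by_cases hgood : μ' (u * C c + (u * a s') /ₘ φ₀) ≤ μ' u + μ' (C c)
    · rw [hcomp]
      calc μ' (u * C c + (u * a s') /ₘ φ₀) + (((t + (s' + 1)) • γ : Γ) : WithTop Γ)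
          ≤ (μ' u + μ' (C c)) + (((t + (s' + 1)) • γ : Γ) : WithTop Γ) := add_le_add_left hgood _
        _ = μ' u + ((t • γ : Γ) : WithTop Γ) + μ' φ := by
            rw [hμ'φ, add_nsmul, WithTop.coe_add]
            abel
    · push_neg at hgood
      have hβ : μ' (u * C c) = μ' u + μ' (C c) := hμ'm u (C c)
      have hq0 : (u * a s') /ₘ φ₀ ≠ 0 := by
        intro h0
        rw [h0, add_zero, hβ] at hgood
        exact absurd hgood (lt_irrefl _)
      have hqle : μ' ((u * a s') /ₘ φ₀) ≤ μ' u + μ' (C c) := by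
        by_contra hcon
        push_neg at hcon
        have h3 := hμ'a (u * C c + (u * a s') /ₘ φ₀) (-((u * a s') /ₘ φ₀))
        rw [add_neg_cancel_right, hμ'neg, hβ] at h3
        exact absurd h3 (not_le_of_gt (lt_min hgood hcon))
      have hcinv : (c⁻¹ : K) ≠ 0 := inv_ne_zero hc
      have hCcinvfin : μ' (C c⁻¹) ≠ ⊤ := hfin _ (by simp [hcinv])
      have hinv : μ' (C c⁻¹) + μ' (C c) = 0 := by
        rw [← hμ'm, ← C_mul, inv_mul_cancel₀ hc, C_1, hμ'one]
      have h12 : μ' (C c⁻¹) + (μ' u + μ' (C c)) = μ' u := by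
        rw [show μ' (C c⁻¹) + (μ' u + μ' (C c)) = μ' (C c⁻¹) + μ' (C c) + μ' u from by abel,
          hinv, zero_add]
      have hu₁0 : (-(C c⁻¹ * ((u * a s') /ₘ φ₀))) ≠ 0 := by
        simp [hcinv, hq0]
      have hqdeg : ((u * a s') /ₘ φ₀).degree < φ₀.degree :=
        Stmt0Aux.qdeg hφ₀ hudeg (hadeg s' (by omega))
      have hu₁deg : (-(C c⁻¹ * ((u * a s') /ₘ φ₀))).degree < φ₀.degree := by
        rw [degree_neg, degree_mul, degree_C hcinv, zero_add]
        exact hqdeg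
      have hndeg : (-(C c⁻¹ * ((u * a s') /ₘ φ₀))).natDegree < u.natDegree := by
        have h4 : (-(C c⁻¹ * ((u * a s') /ₘ φ₀))).natDegree = ((u * a s') /ₘ φ₀).natDegree := by
          rw [natDegree_neg, natDegree_C_mul hcinv]
        have has'0 : a s' ≠ 0 := by
          intro h0
          apply hq0
          rw [h0, mul_zero, zero_divByMonic]
        have h5 : ((u * a s') /ₘ φ₀).natDegree = (u * a s').natDegree - φ₀.natDegree :=
          natDegree_divByMonic _ hφ₀
        have h6 : (u * a s').natDegree = u.natDegree + (a s').natDegree := natDegree_mul hu0 has'0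
        have h7 : (a s').natDegree < φ₀.natDegree :=
          natDegree_lt_natDegree has'0 (hdeg s' (by omega))
        have h8 : φ₀.natDegree ≤ (u * a s').natDegree := by
          by_contra h10
          push_neg at h10
          apply hq0
          refine (divByMonic_eq_zero_iff hφ₀).mpr ?_
          calc (u * a s').degree ≤ ((u * a s').natDegree : WithBot ℕ) := degree_le_natDegree
            _ < (φ₀.natDegree : WithBot ℕ) := by exact_mod_cast h10
            _ = φ₀.degree := (degree_eq_natDegree hφ₀0).symm
        omega
      have hu₁le : μ' (-(C c⁻¹ * ((u * a s') /ₘ φ₀))) ≤ μ' u := by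
        rw [hμ'neg, hμ'm]
        calc μ' (C c⁻¹) + μ' ((u * a s') /ₘ φ₀)
            ≤ μ' (C c⁻¹) + (μ' u + μ' (C c)) := add_le_add_right hqle _
          _ = μ' u := h12
      have hsum2 : u + C c⁻¹ * ((u * a s') /ₘ φ₀)
          = C c⁻¹ * (u * C c + (u * a s') /ₘ φ₀) := by
        rw [mul_add, ← mul_assoc]
        congr 1
        rw [mul_comm (C c⁻¹) u, mul_assoc, ← C_mul, inv_mul_cancel₀ hc, C_1, mul_one]
      have hgt : μ' u < μ' (u + C c⁻¹ * ((u * a s') /ₘ φ₀)) := by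
        rw [hsum2, hμ'm]
        have h11 : μ' (C c⁻¹) + (μ' u + μ' (C c))
            < μ' (C c⁻¹) + μ' (u * C c + (u * a s') /ₘ φ₀) :=
          WithTop.add_lt_add_left hCcinvfin hgood
        rwa [h12] at h11
      have hdec : u * φ₀ ^ t * φ = (-(C c⁻¹ * ((u * a s') /ₘ φ₀))) * φ₀ ^ t * φ
          + (u + C c⁻¹ * ((u * a s') /ₘ φ₀)) * φ₀ ^ t * φ := by
        ring
      have hA := ih (-(C c⁻¹ * ((u * a s') /ₘ φ₀))).natDegree (by omega)
        (-(C c⁻¹ * ((u * a s') /ₘ φ₀))) le_rfl hu₁0 hu₁deg t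
      have hT : μ' (Stmt0Aux.eC φ₀ (t + (s' + 1)) ((-(C c⁻¹ * ((u * a s') /ₘ φ₀))) * φ₀ ^ t * φ))
          + (((t + (s' + 1)) • γ : Γ) : WithTop Γ)
          ≤ μ' u + ((t • γ : Γ) : WithTop Γ) + μ' φ :=
        le_trans hA (add_le_add_left (add_le_add_left hu₁le _) _)
      have hB : μ' u + ((t • γ : Γ) : WithTop Γ) + μ' φ
          < μ' (Stmt0Aux.eC φ₀ (t + (s' + 1)) ((u + C c⁻¹ * ((u * a s') /ₘ φ₀)) * φ₀ ^ t * φ))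
            + (((t + (s' + 1)) • γ : Γ) : WithTop Γ) := by
        refine lt_of_lt_of_le ?_ (hkey _ _)
        rw [hμ'm, hμ'm, hpow]
        exact WithTop.add_lt_add_right hφfin
          (WithTop.add_lt_add_right WithTop.coe_ne_top hgt)
      have hxy : μ' (Stmt0Aux.eC φ₀ (t + (s' + 1)) ((-(C c⁻¹ * ((u * a s') /ₘ φ₀))) * φ₀ ^ t * φ))
          < μ' (Stmt0Aux.eC φ₀ (t + (s' + 1)) ((u + C c⁻¹ * ((u * a s') /ₘ φ₀)) * φ₀ ^ t * φ)) :=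
        (WithTop.add_lt_add_iff_right WithTop.coe_ne_top).mp (lt_of_le_of_lt hT hB)
      rw [hdec, Stmt0Aux.eC_add hφ₀, hstrict _ _ hxy]
      exact hT
  -- degree bound for φ
  have hφdegle : φ.degree ≤ (((s' + 1) * φ₀.natDegree : ℕ) : WithBot ℕ) := by
    rw [hφ]
    refine le_trans (degree_sum_le _ _) (Finset.sup_le ?_)
    intro j hj
    refine le_trans (degree_mul_le _ _) ?_
    have hpj : (φ₀ ^ j).degree = ((j * φ₀.natDegree : ℕ) : WithBot ℕ) := by
      rw [degree_eq_natDegree (pow_ne_zero j hφ₀0), natDegree_pow]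
    rcases Nat.lt_succ_iff_lt_or_eq.mp (mem_range.mp hj) with hjs | rfl
    · by_cases ha0 : a j = 0
      · simp [ha0]
      · rw [hpj, degree_eq_natDegree ha0]
        have h1 : (a j).natDegree < φ₀.natDegree := natDegree_lt_natDegree ha0 (hdeg j hjs)
        have h2a : (j + 1) * φ₀.natDegree ≤ (s' + 1) * φ₀.natDegree :=
          Nat.mul_le_mul_right _ (by omega)
        have h2b : (j + 1) * φ₀.natDegree = j * φ₀.natDegree + φ₀.natDegree := by ring
        have h3 : (a j).natDegree + j * φ₀.natDegree ≤ (s' + 1) * φ₀.natDegree := by omega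
        exact_mod_cast h3
    · rw [has, hpj]
      refine le_trans (add_le_add_left degree_C_le _) ?_
      rw [zero_add]
  -- GENERAL LEMMA
  have general : ∀ n (p : Polynomial K), p.natDegree ≤ n → p ≠ 0 →
      ∃ k, s' + 1 ≤ k ∧
        μ' (Stmt0Aux.eC φ₀ k (p * φ)) + ((k • γ : Γ) : WithTop Γ) ≤ μ' p + μ' φ := by
    intro n
    induction n using Nat.strong_induction_on with
    | _ n ih =>
    intro p hpn hp0
    set t := p.natDegree / φ₀.natDegree with ht
    have hdegp : p.degree < (((t + 1) * φ₀.natDegree : ℕ) : WithBot ℕ) := by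
      rw [degree_eq_natDegree hp0]
      have e1 : t * φ₀.natDegree + p.natDegree % φ₀.natDegree = p.natDegree := by
        rw [ht, mul_comm]
        exact Nat.div_add_mod _ _
      have e2 : p.natDegree % φ₀.natDegree < φ₀.natDegree := Nat.mod_lt _ hd
      have e3 : (t + 1) * φ₀.natDegree = t * φ₀.natDegree + φ₀.natDegree := by ring
      have e4 : p.natDegree < (t + 1) * φ₀.natDegree := by omega
      exact_mod_cast e4
    have hrec := Stmt0Aux.recon hφ₀ hd hdegp
    rw [Finset.sum_range_succ] at hrec
    have htd : t * φ₀.natDegree ≤ p.natDegree := by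
      rw [ht]
      exact Nat.div_mul_le_self _ _
    have hu0 : Stmt0Aux.eC φ₀ t p ≠ 0 := by
      intro h0
      rw [h0, zero_mul, add_zero] at hrec
      have hdlt : p.degree < ((t * φ₀.natDegree : ℕ) : WithBot ℕ) := by
        rw [hrec]
        exact Stmt0Aux.deg_sum_lt hφ₀ hd (fun j _ => Stmt0Aux.eC_degree_lt hφ₀ j p)
      rw [degree_eq_natDegree hp0] at hdlt
      have hx : p.natDegree < t * φ₀.natDegree := by exact_mod_cast hdlt
      omega
    have hudeg := Stmt0Aux.eC_degree_lt hφ₀ t p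
    have hA : μ' (Stmt0Aux.eC φ₀ t p * φ₀ ^ t)
        = μ' (Stmt0Aux.eC φ₀ t p) + ((t • γ : Γ) : WithTop Γ) := by
      rw [hμ'm, hpow]
    have hple : μ' p ≤ μ' (Stmt0Aux.eC φ₀ t p) + ((t • γ : Γ) : WithTop Γ) := hkey p t
    have hpml : p - Stmt0Aux.eC φ₀ t p * φ₀ ^ t = ∑ j ∈ range t, Stmt0Aux.eC φ₀ j p * φ₀ ^ j :=
      sub_eq_of_eq_add hrec
    by_cases hcaseA : μ' (Stmt0Aux.eC φ₀ t p) + ((t • γ : Γ) : WithTop Γ)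
        ≤ μ' (p - Stmt0Aux.eC φ₀ t p * φ₀ ^ t)
    · refine ⟨t + (s' + 1), Nat.le_add_left _ _, ?_⟩
      have hpeq : μ' p = μ' (Stmt0Aux.eC φ₀ t p) + ((t • γ : Γ) : WithTop Γ) := by
        refine le_antisymm hple ?_
        have h1 := hμ'a (Stmt0Aux.eC φ₀ t p * φ₀ ^ t) (p - Stmt0Aux.eC φ₀ t p * φ₀ ^ t)
        have hid : Stmt0Aux.eC φ₀ t p * φ₀ ^ t + (p - Stmt0Aux.eC φ₀ t p * φ₀ ^ t) = p := by
          ring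
        rw [hid, hA, min_eq_left hcaseA] at h1
        exact h1
      have hsplit : p * φ = Stmt0Aux.eC φ₀ t p * φ₀ ^ t * φ
          + (p - Stmt0Aux.eC φ₀ t p * φ₀ ^ t) * φ := by ring
      rw [hsplit, Stmt0Aux.eC_add hφ₀]
      have hzero : Stmt0Aux.eC φ₀ (t + (s' + 1)) ((p - Stmt0Aux.eC φ₀ t p * φ₀ ^ t) * φ) = 0 := by
        by_cases hpm0 : p - Stmt0Aux.eC φ₀ t p * φ₀ ^ t = 0
        · rw [hpm0, zero_mul, Stmt0Aux.eC_zero_poly]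
        · refine Stmt0Aux.eC_eq_zero_of_degree_lt hφ₀ hd ?_
          have hdpm : (p - Stmt0Aux.eC φ₀ t p * φ₀ ^ t).degree
              < ((t * φ₀.natDegree : ℕ) : WithBot ℕ) := by
            rw [hpml]
            exact Stmt0Aux.deg_sum_lt hφ₀ hd (fun j _ => Stmt0Aux.eC_degree_lt hφ₀ j p)
          rw [degree_mul, degree_eq_natDegree hpm0, degree_eq_natDegree hφne]
          rw [degree_eq_natDegree hpm0] at hdpm
          have h1 : (p - Stmt0Aux.eC φ₀ t p * φ₀ ^ t).natDegree < t * φ₀.natDegree := by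
            exact_mod_cast hdpm
          have h2 : φ.natDegree ≤ (s' + 1) * φ₀.natDegree := by
            have h2' := hφdegle
            rw [degree_eq_natDegree hφne] at h2'
            exact_mod_cast h2'
          have h3 : (t + (s' + 1)) * φ₀.natDegree
              = t * φ₀.natDegree + (s' + 1) * φ₀.natDegree := by ring
          have h4 : (p - Stmt0Aux.eC φ₀ t p * φ₀ ^ t).natDegree + φ.natDegree
              < (t + (s' + 1)) * φ₀.natDegree := by omega
          exact_mod_cast h4
      rw [hzero, add_zero, hpeq]
      exact main (Stmt0Aux.eC φ₀ t p).natDegree _ le_rfl hu0 hudeg t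
    · push_neg at hcaseA
      have hpm0 : p - Stmt0Aux.eC φ₀ t p * φ₀ ^ t ≠ 0 := by
        intro h0
        rw [h0, (hμ'0 0).mpr rfl] at hcaseA
        exact WithTop.not_top_lt _ hcaseA
      have hpeq : μ' p = μ' (p - Stmt0Aux.eC φ₀ t p * φ₀ ^ t) := by
        refine le_antisymm ?_ ?_
        · have h1 := hμ'a p (-(Stmt0Aux.eC φ₀ t p * φ₀ ^ t))
          rw [← sub_eq_add_neg, hμ'neg, hA] at h1
          rcases le_total (μ' p) (μ' (Stmt0Aux.eC φ₀ t p) + ((t • γ : Γ) : WithTop Γ))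
            with hcc | hcc
          · rwa [min_eq_left hcc] at h1
          · rw [min_eq_right hcc] at h1
            exact absurd h1 (not_le_of_gt hcaseA)
        · have h1 := hμ'a (Stmt0Aux.eC φ₀ t p * φ₀ ^ t) (p - Stmt0Aux.eC φ₀ t p * φ₀ ^ t)
          have hid : Stmt0Aux.eC φ₀ t p * φ₀ ^ t + (p - Stmt0Aux.eC φ₀ t p * φ₀ ^ t) = p := by
            ring
          rw [hid, hA, min_eq_right hcaseA.le] at h1
          exact h1
      have hdpm : (p - Stmt0Aux.eC φ₀ t p * φ₀ ^ t).degree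
          < ((t * φ₀.natDegree : ℕ) : WithBot ℕ) := by
        rw [hpml]
        exact Stmt0Aux.deg_sum_lt hφ₀ hd (fun j _ => Stmt0Aux.eC_degree_lt hφ₀ j p)
      have hndeg : (p - Stmt0Aux.eC φ₀ t p * φ₀ ^ t).natDegree < p.natDegree := by
        rw [degree_eq_natDegree hpm0] at hdpm
        have h1 : (p - Stmt0Aux.eC φ₀ t p * φ₀ ^ t).natDegree < t * φ₀.natDegree := by
          exact_mod_cast hdpm
        omega
      obtain ⟨k, hks, hkb⟩ := ih (p - Stmt0Aux.eC φ₀ t p * φ₀ ^ t).natDegree (by omega)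
        (p - Stmt0Aux.eC φ₀ t p * φ₀ ^ t) le_rfl hpm0
      refine ⟨k, hks, ?_⟩
      have hsplit : p * φ = (p - Stmt0Aux.eC φ₀ t p * φ₀ ^ t) * φ
          + Stmt0Aux.eC φ₀ t p * φ₀ ^ t * φ := by ring
      have hBB : μ' (Stmt0Aux.eC φ₀ k ((p - Stmt0Aux.eC φ₀ t p * φ₀ ^ t) * φ))
          < μ' (Stmt0Aux.eC φ₀ k (Stmt0Aux.eC φ₀ t p * φ₀ ^ t * φ)) := by
        have h2 := hkey (Stmt0Aux.eC φ₀ t p * φ₀ ^ t * φ) k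
        have h4 : μ' (p - Stmt0Aux.eC φ₀ t p * φ₀ ^ t) + μ' φ
            < μ' (Stmt0Aux.eC φ₀ t p * φ₀ ^ t * φ) := by
          rw [hμ'm, hA]
          exact WithTop.add_lt_add_right hφfin hcaseA
        have h5 : μ' (Stmt0Aux.eC φ₀ k ((p - Stmt0Aux.eC φ₀ t p * φ₀ ^ t) * φ))
              + ((k • γ : Γ) : WithTop Γ)
            < μ' (Stmt0Aux.eC φ₀ k (Stmt0Aux.eC φ₀ t p * φ₀ ^ t * φ))
              + ((k • γ : Γ) : WithTop Γ) :=
          lt_of_le_of_lt hkb (lt_of_lt_of_le h4 h2)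
        exact (WithTop.add_lt_add_iff_right WithTop.coe_ne_top).mp h5
      rw [hsplit, Stmt0Aux.eC_add hφ₀, hstrict _ _ hBB, hpeq]
      exact hkb
  -- FINAL
  by_contra hcon
  push_neg at hcon
  have hh0 : h₁ ≠ 0 := by
    rintro rfl
    rw [zero_mul, sub_zero] at hlt
    exact absurd hlt (lt_irrefl _)
  obtain ⟨k, hks, hkb⟩ := general h₁.natDegree h₁ le_rfl hh0
  have hμhφle : μ' (h₁ * φ) ≤ μ' g := by
    have h1 := hμ'a (g - h₁ * φ) (h₁ * φ)
    have hid : g - h₁ * φ + h₁ * φ = g := by ring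
    rw [hid] at h1
    rcases le_total (μ' (g - h₁ * φ)) (μ' (h₁ * φ)) with hcc | hcc
    · rw [min_eq_left hcc] at h1
      exact absurd (lt_of_lt_of_le hlt h1) (lt_irrefl _)
    · rwa [min_eq_right hcc] at h1
  have hgdeg : g.degree < ((k * φ₀.natDegree : ℕ) : WithBot ℕ) := by
    refine lt_of_lt_of_le (lt_of_lt_of_le hcon hφdegle) ?_
    exact_mod_cast Nat.mul_le_mul_right φ₀.natDegree hks
  have hecg : Stmt0Aux.eC φ₀ k g = 0 := Stmt0Aux.eC_eq_zero_of_degree_lt hφ₀ hd hgdeg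
  have hsub : Stmt0Aux.eC φ₀ k (g - h₁ * φ) = -(Stmt0Aux.eC φ₀ k (h₁ * φ)) := by
    rw [sub_eq_add_neg, Stmt0Aux.eC_add hφ₀, hecg, zero_add, Stmt0Aux.eC_neg hφ₀]
  have hfinal : μ' (g - h₁ * φ) ≤ μ' g := by
    calc μ' (g - h₁ * φ)
        ≤ μ' (Stmt0Aux.eC φ₀ k (g - h₁ * φ)) + ((k • γ : Γ) : WithTop Γ) := hkey _ k
      _ = μ' (Stmt0Aux.eC φ₀ k (h₁ * φ)) + ((k • γ : Γ) : WithTop Γ) := by rw [hsub, hμ'neg]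
      _ ≤ μ' h₁ + μ' φ := hkb
      _ = μ' (h₁ * φ) := (hμ'm h₁ φ).symm
      _ ≤ μ' g := hμhφle
  exact absurd hlt (not_lt_of_ge hfinal)
end

section
/- Let ν be a valuation on K, μ a valuation on K[x] extending ν, β₁ = μ(x), and ν₁ the monomial valuation ν₁(Σ d_i x^i) = min_i(ν(d_i) + iβ₁). If h = Σ_{i=0}^s d_i x^i satisfies ν₁(h) < μ(h), then Σ_{i ∈ S} in_ν(d_i) · in_μ(x)^i = 0 in the graded algebra G_μ, where S = {i : iβ₁ + ν(d_i) = ν₁(h)}. -/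
open Polynomial Finset

/-! The sum `Σ_{i∈S} in_ν(dᵢ)·in_μ(x)ⁱ` vanishes in `G_μ` exactly when `μ(Σ_{i∈S} dᵢ xⁱ) > ν₁(h)`.
Since `μ` is a valuation, `μ(dᵢ xⁱ) = ν(dᵢ) + iβ₁ ≥ ν₁(h)`. The terms with `i ∉ S` therefore sum
to a polynomial of value `> ν₁(h)`, and subtracting it from `h`, whose value is also `> ν₁(h)`,
leaves the `S`-part with value `> ν₁(h)` by the ultrametric inequality. -/

theorem AddValuation.lt_map_sum_filter_eq {R Γ₀ ι : Type*} [Ring R]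
    [LinearOrderedAddCommMonoidWithTop Γ₀] (v : AddValuation R Γ₀) {t : Finset ι} {f : ι → R}
    {c : Γ₀} (hc : ∀ i ∈ t, c ≤ v (f i)) (hlt : c < v (∑ i ∈ t, f i)) :
    c < v (∑ i ∈ t with v (f i) = c, f i) := by
  have hrest : c < v (∑ i ∈ t with ¬v (f i) = c, f i) :=
    v.map_lt_sum' (hlt.trans_le le_top) fun i hi =>
      (hc i (mem_filter.1 hi).1).lt_of_ne (Ne.symm (mem_filter.1 hi).2)
  rw [← sum_filter_add_sum_filter_not t (fun i => v (f i) = c)] at hlt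
  rw [← v.map_neg] at hrest
  have key := v.map_lt_add hlt hrest
  rwa [add_neg_cancel_right] at key

theorem map_one_eq_zero_of_map_mul {R Γ : Type*} [MulOneClass R] [AddCommMonoid Γ]
    [IsLeftCancelAdd Γ] (μ : R → WithTop Γ) (hone : μ 1 ≠ ⊤)
    (hmul : ∀ f g, μ (f * g) = μ f + μ g) : μ 1 = 0 :=
  (WithTop.add_left_inj hone).1 (by rw [← hmul, mul_one, add_zero])

theorem stmt2_general {K : Type*} [Field K] {Γ : Type*} [AddCommGroup Γ] [LinearOrder Γ] [IsOrderedAddMonoid Γ]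
    (ν : K → WithTop Γ) (μ : Polynomial K → WithTop Γ) (β₁ : Γ)
    (hμ0 : ∀ f, μ f = ⊤ ↔ f = 0)
    (hμm : ∀ f g, μ (f * g) = μ f + μ g)
    (hμa : ∀ f g, min (μ f) (μ g) ≤ μ (f + g))
    (hext : ∀ a : K, μ (C a) = ν a)
    (hβ : μ X = (β₁ : WithTop Γ))
    (s : ℕ) (d : ℕ → K)
    (ν₁h : WithTop Γ)
    (hν₁ : ν₁h = (range (s + 1)).inf
      fun i => ν (d i) + ((i • β₁ : Γ) : WithTop Γ))
    (hlt : ν₁h < μ (∑ i ∈ range (s + 1), C (d i) * X ^ i)) :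
    ν₁h < μ (∑ i ∈ (range (s + 1)).filter
        (fun i => ν (d i) + ((i • β₁ : Γ) : WithTop Γ) = ν₁h),
      C (d i) * X ^ i) := by
  let v : AddValuation K[X] (WithTop Γ) := AddValuation.of μ ((hμ0 0).2 rfl)
    (map_one_eq_zero_of_map_mul μ (by simp [hμ0]) hμm) hμa hμm
  have hterm (i : ℕ) : v (C (d i) * X ^ i) = ν (d i) + ((i • β₁ : Γ) : WithTop Γ) := by
    simp [v, hext, hβ]
  have hmin (i : ℕ) (hi : i ∈ range (s + 1)) : ν₁h ≤ v (C (d i) * X ^ i) :=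
    hterm i ▸ hν₁ ▸ inf_le hi
  have key := v.lt_map_sum_filter_eq hmin hlt
  simp only [hterm] at key
  exact key

/-- If `h = Σ_{i≤s} dᵢ xⁱ` satisfies `ν₁(h) < μ(h)`, then the sum of the initial
forms `Σ_{i∈S} in_ν(dᵢ)·in_μ(x)ⁱ` vanishes in the graded algebra `G_μ`; this is
encoded by the statement that `μ` of the corresponding sum of terms of minimal
`ν₁`-value strictly exceeds `ν₁(h)`, where `S = {i : i·β₁ + ν(dᵢ) = ν₁(h)}`. -/
theorem stmt2 {K : Type*} [Field K] {Γ : Type*} [AddCommGroup Γ] [LinearOrder Γ] [IsOrderedAddMonoid Γ]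
    (ν : K → WithTop Γ) (μ : Polynomial K → WithTop Γ) (β₁ : Γ)
    (hν0 : ∀ a, ν a = ⊤ ↔ a = 0)
    (hνm : ∀ a b, ν (a * b) = ν a + ν b)
    (hνa : ∀ a b, min (ν a) (ν b) ≤ ν (a + b))
    (hμ0 : ∀ f, μ f = ⊤ ↔ f = 0)
    (hμm : ∀ f g, μ (f * g) = μ f + μ g)
    (hμa : ∀ f g, min (μ f) (μ g) ≤ μ (f + g))
    (hext : ∀ a : K, μ (C a) = ν a)
    (hβ : μ X = (β₁ : WithTop Γ))
    (s : ℕ) (d : ℕ → K)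
    (ν₁h : WithTop Γ)
    (hν₁ : ν₁h = (range (s + 1)).inf
      fun i => ν (d i) + ((i • β₁ : Γ) : WithTop Γ))
    (hlt : ν₁h < μ (∑ i ∈ range (s + 1), C (d i) * X ^ i)) :
    ν₁h < μ (∑ i ∈ (range (s + 1)).filter
        (fun i => ν (d i) + ((i • β₁ : Γ) : WithTop Γ) = ν₁h),
      C (d i) * X ^ i) :=
  stmt2_general ν μ β₁ hμ0 hμm hμa hext hβ s d ν₁h hν₁ hlt
end

section
/- Let ν be a valuation on K, μ a valuation of K[x] extending ν with β₁ = μ(x), and suppose there exists h ∈ K[x] with ν₁(h) < μ(h) (ν₁ the monomial valuation). Then in_μ(x) is integral over the graded ring G_ν. -/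
open Polynomial Finset

/-!
Since `ν = μ ∘ C`, everything happens inside the valuation `μ` on `K[X]`. Write
`h = ∑ aᵢ Xⁱ`, let `m = minᵢ (ν aᵢ + i β₁) = ν₁(h)` and let `n` be the largest index attaining it.
The monomials of degree `> n` all have value `> m`, and so does `h`; hence the truncation
`h₁ = ∑_{i ≤ n} aᵢ Xⁱ` has `μ h₁ > m`, which forces `n ≥ 1` (a constant has value exactly `m`).
Dividing `h₁` by `aₙ` gives a monic `P` of degree `n` with `μ P > n β₁` and
`ν (aᵢ / aₙ) + i β₁ ≥ n β₁`, i.e. an integral equation for `in_μ(x)` over `G_ν`.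
-/

theorem Finset.exists_greatest_mem_eq_inf {α β : Type*} [LinearOrder α] [LinearOrder β] [OrderTop β]
    {s : Finset α} (hs : s.Nonempty) (f : α → β) :
    ∃ n ∈ s, f n = s.inf f ∧ ∀ i ∈ s, n < i → s.inf f < f i := by
  classical
  obtain ⟨j, hj, hjf⟩ := s.exists_mem_eq_inf hs f
  have hne : (s.filter fun i => f i = s.inf f).Nonempty := ⟨j, mem_filter.2 ⟨hj, hjf.symm⟩⟩
  obtain ⟨hn, hfn⟩ := mem_filter.1 (max'_mem _ hne)
  refine ⟨_, hn, hfn, fun i hi hni => (inf_le hi).lt_of_ne fun hfi => ?_⟩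
  exact hni.not_ge (le_max' _ i (mem_filter.2 ⟨hi, hfi.symm⟩))

namespace AddValuation

section CommRing

variable {R : Type*} [CommRing R] {Γ₀ : Type*} [LinearOrderedAddCommMonoidWithTop Γ₀]
  (v : AddValuation R[X] Γ₀)

theorem map_C_mul_X_pow (a : R) (i : ℕ) : v (C a * X ^ i) = v (C a) + i • v X := by
  rw [map_mul, map_pow]

theorem lt_map_sum_range_of_lt {h : R[X]} {m : Γ₀} {n : ℕ} (hn : n ≤ h.natDegree)
    (hm : m < v h) (htail : ∀ i ∈ Ico (n + 1) (h.natDegree + 1), m < v (C (h.coeff i) * X ^ i)) :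
    m < v (∑ i ∈ range (n + 1), C (h.coeff i) * X ^ i) := by
  set tail := ∑ i ∈ Ico (n + 1) (h.natDegree + 1), C (h.coeff i) * X ^ i
  have hsplit : ∑ i ∈ range (n + 1), C (h.coeff i) * X ^ i = h - tail := by
    conv_rhs => rw [h.as_sum_range_C_mul_X_pow, ← sum_range_add_sum_Ico _ (by omega : n + 1 ≤ _)]
    ring
  have htail : m < v tail := v.map_lt_sum' (hm.trans_le le_top) htail
  rw [hsplit]
  exact (lt_min hm htail).trans_le (v.map_sub h tail)

end CommRing

variable {K : Type*} [Field K] {Γ₀ : Type*} [LinearOrderedAddCommGroupWithTop Γ₀]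
  (v : AddValuation K[X] Γ₀)

theorem exists_monic_of_lt_map_sum (c : ℕ → K) (n : ℕ) (hcn : v (C (c n)) ≠ ⊤)
    (hle : ∀ i < n, v (C (c n)) + n • v X ≤ v (C (c i)) + i • v X)
    (hlt : v (C (c n)) + n • v X < v (∑ i ∈ range (n + 1), C (c i) * X ^ i)) :
    ∃ d : ℕ → K, (∀ i < n, n • v X ≤ v (C (d i)) + i • v X) ∧
      n • v X < v (X ^ n + ∑ i ∈ range n, C (d i) * X ^ i) := by
  have hc : c n ≠ 0 := fun h => hcn (by rw [h, C_0, map_zero])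
  have hd : ∀ i, v (C (c n)) + v (C (c i / c n)) = v (C (c i)) := fun i => by
    rw [← map_mul, ← C_mul, mul_div_cancel₀ _ hc]
  have hnorm : C (c n) * (X ^ n + ∑ i ∈ range n, C (c i / c n) * X ^ i) =
      ∑ i ∈ range (n + 1), C (c i) * X ^ i := by
    simp only [sum_range_succ, mul_add, mul_sum, ← mul_assoc, ← C_mul, mul_div_cancel₀ _ hc]
    ring
  refine ⟨fun i => c i / c n, fun i hi => ?_, ?_⟩
  · rw [← add_le_add_iff_right_of_ne_top hcn, ← add_assoc, hd]
    exact hle i hi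
  · rwa [← add_lt_add_iff_right_of_ne_top hcn, ← map_mul, hnorm]

theorem exists_monic_of_inf_lt {h : K[X]}
    (hh : (range (h.natDegree + 1)).inf (fun i => v (C (h.coeff i)) + i • v X) < v h) :
    ∃ n, 1 ≤ n ∧ ∃ d : ℕ → K, (∀ i < n, n • v X ≤ v (C (d i)) + i • v X) ∧
      n • v X < v (X ^ n + ∑ i ∈ range n, C (d i) * X ^ i) := by
  obtain ⟨n, hn, hfn, hgt⟩ := exists_greatest_mem_eq_inf nonempty_range_add_one
    fun i => v (C (h.coeff i)) + i • v X
  set m := (range (h.natDegree + 1)).inf fun i => v (C (h.coeff i)) + i • v X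
  have hnN : n ≤ h.natDegree := Nat.lt_succ_iff.1 (mem_range.1 hn)
  have hcn : v (C (h.coeff n)) ≠ ⊤ :=
    fun htop => (hh.trans_le le_top).ne (by rw [← hfn, htop, top_add])
  have htrunc : m < v (∑ i ∈ range (n + 1), C (h.coeff i) * X ^ i) := by
    refine v.lt_map_sum_range_of_lt hnN hh fun i hi => ?_
    obtain ⟨hni, hiN⟩ := mem_Ico.1 hi
    rw [map_C_mul_X_pow]
    exact hgt i (mem_range.2 hiN) hni
  have hn1 : 1 ≤ n := by
    by_contra! hn0
    obtain rfl : n = 0 := by omega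
    rw [sum_range_one, map_C_mul_X_pow] at htrunc
    exact htrunc.ne hfn.symm
  refine ⟨n, hn1, v.exists_monic_of_lt_map_sum _ n hcn (fun i hi => ?_) (hfn ▸ htrunc)⟩
  exact hfn ▸ inf_le (mem_range.2 (by omega))

end AddValuation

theorem stmt4_general {K : Type*} [Field K] {Γ : Type*} [AddCommGroup Γ] [LinearOrder Γ] [IsOrderedAddMonoid Γ]
    (ν : K → WithTop Γ) (μ : Polynomial K → WithTop Γ) (β₁ : Γ)
    (hμ0 : ∀ f, μ f = ⊤ ↔ f = 0)
    (hμm : ∀ f g, μ (f * g) = μ f + μ g)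
    (hμa : ∀ f g, min (μ f) (μ g) ≤ μ (f + g))
    (hext : ∀ a : K, μ (C a) = ν a)
    (hβ : μ X = (β₁ : WithTop Γ))
    (hex : ∃ h : Polynomial K,
      (range (h.natDegree + 1)).inf
        (fun i => ν (h.coeff i) + ((i • β₁ : Γ) : WithTop Γ)) < μ h) :
    ∃ n : ℕ, 1 ≤ n ∧ ∃ d : ℕ → K,
      (∀ i < n, ((n • β₁ : Γ) : WithTop Γ) ≤ ν (d i) + ((i • β₁ : Γ) : WithTop Γ)) ∧
      ((n • β₁ : Γ) : WithTop Γ) < μ (X ^ n + ∑ i ∈ range n, C (d i) * X ^ i) := by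
  have hμ1 : μ 1 = 0 := by
    have h1 : μ 1 ≠ ⊤ := fun h => one_ne_zero ((hμ0 1).1 h)
    rw [← add_right_inj_of_ne_top h1, ← hμm, mul_one, add_zero]
  let v := AddValuation.of μ ((hμ0 0).2 rfl) hμ1 hμa hμm
  have hνv : ∀ a, ν a = v (C a) := fun a => (hext a).symm
  have hβv : ∀ i : ℕ, ((i • β₁ : Γ) : WithTop Γ) = i • v X := fun i => by
    rw [WithTop.coe_nsmul, ← hβ]
    rfl
  obtain ⟨h, hh⟩ := hex
  simp only [hνv, hβv] at hh ⊢
  exact v.exists_monic_of_inf_lt hh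

/-- If there exists `h ∈ K[x]` with `ν₁(h) < μ(h)`, then `in_μ(x)` is integral
over the graded ring `G_ν`: there is a monic homogeneous relation, encoded by
the existence of `n ≥ 1` and constants `dᵢ` with `ν(dᵢ) + i·β₁ ≥ n·β₁` such
that `μ(xⁿ + Σ_{i<n} dᵢ xⁱ) > n·β₁`. -/
theorem stmt4 {K : Type*} [Field K] {Γ : Type*} [AddCommGroup Γ] [LinearOrder Γ] [IsOrderedAddMonoid Γ]
    (ν : K → WithTop Γ) (μ : Polynomial K → WithTop Γ) (β₁ : Γ)
    (hν0 : ∀ a, ν a = ⊤ ↔ a = 0)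
    (hνm : ∀ a b, ν (a * b) = ν a + ν b)
    (hνa : ∀ a b, min (ν a) (ν b) ≤ ν (a + b))
    (hμ0 : ∀ f, μ f = ⊤ ↔ f = 0)
    (hμm : ∀ f g, μ (f * g) = μ f + μ g)
    (hμa : ∀ f g, min (μ f) (μ g) ≤ μ (f + g))
    (hext : ∀ a : K, μ (C a) = ν a)
    (hβ : μ X = (β₁ : WithTop Γ))
    (hex : ∃ h : Polynomial K,
      (range (h.natDegree + 1)).inf
        (fun i => ν (h.coeff i) + ((i • β₁ : Γ) : WithTop Γ)) < μ h) :
    ∃ n : ℕ, 1 ≤ n ∧ ∃ d : ℕ → K,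
      (∀ i < n, ((n • β₁ : Γ) : WithTop Γ) ≤ ν (d i) + ((i • β₁ : Γ) : WithTop Γ)) ∧
      ((n • β₁ : Γ) : WithTop Γ) < μ (X ^ n + ∑ i ∈ range n, C (d i) * X ^ i) :=
  stmt4_general ν μ β₁ hμ0 hμm hμa hext hβ hex
end

section
/- Let {ν_i} be the truncations associated to a system of HOS key polynomials {Q_i}, satisfying: β_i = μ(Q_i) > α_i·β_{i₀} where Q_i has degree α_i in Q_{i₀} (Corollary 25 of HOS), and ν_{i₀}(f) = μ(f) for all f with deg_x f < deg_x Q_i (Proposition 36 of HOS). Suppose f ∈ K[x] and there exists h ∈ K[x] with ν_{i₀}(f − hQ_i) > ν_{i₀}(f) = ν_{i₀}(hQ_i) (i.e. Q_i ν_{i₀}-divides f). Then μ(f) > ν_{i₀}(f), and consequently deg_x f ≥ deg_x Q_i. In particular Q_i is ν_{i₀}-minimal. -/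
open Polynomial Finset

/-- Let `w = ν_{i₀}` be a truncation of `μ` with `w(Q) < μ(Q)` and
`μ(y) = w(y)` for all `y` of degree `< deg Q` (Proposition 36 of HOS), and
`w ≤ μ`. If `Q` `w`-divides `f`, i.e. there is `h` with
`w(f - hQ) > w(f) = w(hQ)`, then `μ(f) > w(f)` and hence
`deg f ≥ deg Q`; in particular `Q` is `w`-minimal. -/
theorem stmt9 {K : Type*} [Field K]
    (μ w : Polynomial K → WithTop ℝ) (Q : Polynomial K) (hQmonic : Q.Monic)
    (hμ0 : ∀ f, μ f = ⊤ ↔ f = 0)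
    (hμm : ∀ f g, μ (f * g) = μ f + μ g)
    (hμa : ∀ f g, min (μ f) (μ g) ≤ μ (f + g))
    (hw0 : ∀ f, w f = ⊤ ↔ f = 0)
    (hwm : ∀ f g, w (f * g) = w f + w g)
    (hwa : ∀ f g, min (w f) (w g) ≤ w (f + g))
    (hle : ∀ f, w f ≤ μ f)
    (hQ : w Q < μ Q)
    (hsmall : ∀ y : Polynomial K, y.degree < Q.degree → μ y = w y)
    (f h : Polynomial K)
    (hdiv : w f = w (h * Q) ∧ w f < w (f - h * Q)) :
    w f < μ f ∧ Q.degree ≤ f.degree := by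
  obtain ⟨heq, hlt⟩ := hdiv
  have hwf : w f ≠ ⊤ := fun ht => not_top_lt (ht ▸ hlt)
  have hh0 : h ≠ 0 := by
    intro h0
    apply hwf
    rw [heq, h0, zero_mul, (hw0 0).mpr rfl]
  have hwh : w h ≠ ⊤ := fun ht => hh0 ((hw0 h).mp ht)
  have key1 : w f < μ (h * Q) := by
    rw [heq, hwm, hμm]
    exact WithTop.add_lt_add_of_le_of_lt hwh (hle h) hQ
  have key2 : w f < μ (f - h * Q) := lt_of_lt_of_le hlt (hle _)
  have hmain : w f < μ f := by
    have := hμa (f - h * Q) (h * Q)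
    rw [sub_add_cancel] at this
    exact lt_of_lt_of_le (lt_min key2 key1) this
  refine ⟨hmain, ?_⟩
  by_contra hdeg
  push_neg at hdeg
  exact absurd (hsmall f hdeg) (fun e => (ne_of_lt hmain) (e.symm ▸ rfl))
end

section
/- Under the hypotheses of the HOS construction (rank-1 ν, truncations ν_{i₀}, ν_i with ν_{i₀}(Q_i) < μ(Q_i), and ν_{i₀}(r) = μ(r) whenever deg_x r < deg_x Q_i): if Q_i ν_{i₀}-divides a product f·g (i.e., there is h with ν_{i₀}(fg − hQ_i) > ν_{i₀}(fg)), then Q_i ν_{i₀}-divides f or Q_i ν_{i₀}-divides g. That is, Q_i is ν_{i₀}-irreducible. -/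
/-!
`Q` `w`-divides `f` exactly when `w f < μ f`. If `f - hQ` has larger `w`-value than `f`,
then `w f ≤ w (hQ) < μ (hQ)`, hence `w f < μ f`. Conversely, write `f = qQ + r` with
`deg r < deg Q`, so that `w r = μ r`; if `w r ≤ w f`, then `μ r = w r ≤ w (qQ) < μ (qQ)`
forces `μ f = μ r ≤ w f`. Since `w` and `μ` are both additive on products and `w ≤ μ`,
`w (fg) < μ (fg)` forces `w f < μ f` or `w g < μ g`.
-/

open Polynomial

lemma map_one_eq_zero_of_map_mul_s10 {R Γ : Type*} [Ring R] [Nontrivial R]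
    [LinearOrderedAddCommGroupWithTop Γ] (v : R → Γ) (hv0 : ∀ x, v x = ⊤ ↔ x = 0)
    (hvm : ∀ x y, v (x * y) = v x + v y) : v 1 = 0 := by
  have hne : v 1 ≠ ⊤ := fun h => one_ne_zero ((hv0 1).mp h)
  have hidem : v 1 + v 1 = v 1 := by simpa using (hvm 1 1).symm
  calc v 1 = v 1 + v 1 + -v 1 :=
        (LinearOrderedAddCommGroupWithTop.add_neg_cancel_right_of_ne_top hne _).symm
    _ = v 1 + -v 1 := by rw [hidem]
    _ = 0 := LinearOrderedAddCommGroupWithTop.add_neg_cancel_of_ne_top hne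

namespace AddValuation

variable {R Γ : Type*} [CommRing R] [LinearOrderedAddCommMonoidWithTop Γ]

/-- `Q` `w`-divides `f`: some multiple `h * Q` has the same initial form as `f` in the graded
algebra of `w`, i.e. `f - h * Q` has larger value than `f`. -/
def InitDvd (w : AddValuation R Γ) (Q f : R) : Prop :=
  ∃ h, w f < w (f - h * Q)

lemma lt_or_lt_of_mul_lt {μ w : AddValuation R Γ} (hle : ∀ f, w f ≤ μ f) {f g : R}
    (hfg : w (f * g) < μ (f * g)) : w f < μ f ∨ w g < μ g := by
  by_contra! h
  rw [map_mul, map_mul, le_antisymm (hle f) h.1, le_antisymm (hle g) h.2] at hfg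
  exact hfg.false

section Polynomial

variable {μ w : AddValuation R[X] Γ} {Q : R[X]}

lemma lt_of_initDvd (hle : ∀ f, w f ≤ μ f) (hQ : ∀ q, q ≠ 0 → w (q * Q) < μ (q * Q))
    {f : R[X]} (hdvd : w.InitDvd Q f) : w f < μ f := by
  obtain ⟨h, hlt⟩ := hdvd
  have hh : h ≠ 0 := by
    rintro rfl
    simp only [zero_mul, sub_zero, lt_self_iff_false] at hlt
  have hwhQ : w f ≤ w (h * Q) := by
    simpa only [sub_sub_cancel, min_eq_left hlt.le] using w.map_sub f (f - h * Q)
  calc w f < min (μ (f - h * Q)) (μ (h * Q)) :=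
        lt_min (hlt.trans_le (hle _)) (hwhQ.trans_lt (hQ h hh))
    _ ≤ μ (f - h * Q + h * Q) := μ.map_add _ _
    _ = μ f := by rw [sub_add_cancel]

lemma initDvd_of_lt [Nontrivial R] (hQmonic : Q.Monic)
    (hlow : ∀ r : R[X], r.degree < Q.degree → w r = μ r)
    (hQ : ∀ q, q ≠ 0 → w (q * Q) < μ (q * Q)) {f : R[X]} (hf : w f < μ f) :
    w.InitDvd Q f := by
  have hr : f - f /ₘ Q * Q = f %ₘ Q := by rw [modByMonic_eq_sub_mul_div, mul_comm]
  have hwr : w (f %ₘ Q) = μ (f %ₘ Q) := hlow _ (degree_modByMonic_lt f hQmonic)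
  generalize f /ₘ Q = q at hr
  generalize f %ₘ Q = r at hr hwr
  have hq : q ≠ 0 := by
    rintro hq
    rw [hq, zero_mul, sub_zero] at hr
    rw [hr, hwr] at hf
    exact hf.false
  refine ⟨q, ?_⟩
  rw [hr]
  by_contra! hrf
  have hwqQ : w r ≤ w (q * Q) := by
    have hqQ : q * Q = f - r := by rw [← hr, sub_sub_cancel]
    simpa only [hqQ, min_eq_right hrf] using w.map_sub f r
  have hμr : μ r < μ (q * Q) := hwr ▸ hwqQ.trans_lt (hQ q hq)
  have hμf : μ f = μ r := by
    rw [← μ.map_add_eq_of_lt_left hμr, ← hr, sub_add_cancel]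
  exact (hf.trans_le (hμf ▸ hwr ▸ hrf)).false

end Polynomial

end AddValuation

theorem stmt10_general {K : Type*} [Field K]
    (μ w : Polynomial K → WithTop ℝ) (Q : Polynomial K) (hQmonic : Q.Monic)
    (hμ0 : ∀ f, μ f = ⊤ ↔ f = 0)
    (hμm : ∀ f g, μ (f * g) = μ f + μ g)
    (hμa : ∀ f g, min (μ f) (μ g) ≤ μ (f + g))
    (hw0 : ∀ f, w f = ⊤ ↔ f = 0)
    (hwm : ∀ f g, w (f * g) = w f + w g)
    (hwa : ∀ f g, min (w f) (w g) ≤ w (f + g))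
    (hle : ∀ f, w f ≤ μ f)
    (hfact2 : ∀ r : Polynomial K, r.degree < Q.degree → w r = μ r)
    (hfact3 : ∀ q : Polynomial K, q ≠ 0 → w (q * Q) < μ (q * Q))
    (f g : Polynomial K)
    (hdiv : ∃ h, w (f * g) < w (f * g - h * Q)) :
    (∃ h, w f < w (f - h * Q)) ∨ (∃ h, w g < w (g - h * Q)) := by
  let μ' := AddValuation.of μ ((hμ0 0).2 rfl) (map_one_eq_zero_of_map_mul_s10 μ hμ0 hμm) hμa hμm
  let w' := AddValuation.of w ((hw0 0).2 rfl) (map_one_eq_zero_of_map_mul_s10 w hw0 hwm) hwa hwm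
  have hfg : w' (f * g) < μ' (f * g) := AddValuation.lt_of_initDvd hle hfact3 hdiv
  have hdvd {p : Polynomial K} (hp : w' p < μ' p) : w'.InitDvd Q p :=
    AddValuation.initDvd_of_lt hQmonic hfact2 hfact3 hp
  exact (AddValuation.lt_or_lt_of_mul_lt hle hfg).imp hdvd hdvd

/-- Under the hypotheses of the HOS construction (rank-1, encoded by values in
`ℝ`): if `Q` `w`-divides a product `f·g` (where `w = ν_{i₀}` is the preceding
truncation of `μ`), then `Q` `w`-divides `f` or `Q` `w`-divides `g`; that is,
`Q` is `w`-irreducible. -/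
theorem stmt10 {K : Type*} [Field K]
    (μ w : Polynomial K → WithTop ℝ) (Q : Polynomial K) (hQmonic : Q.Monic)
    (hμ0 : ∀ f, μ f = ⊤ ↔ f = 0)
    (hμm : ∀ f g, μ (f * g) = μ f + μ g)
    (hμa : ∀ f g, min (μ f) (μ g) ≤ μ (f + g))
    (hw0 : ∀ f, w f = ⊤ ↔ f = 0)
    (hwm : ∀ f g, w (f * g) = w f + w g)
    (hwa : ∀ f g, min (w f) (w g) ≤ w (f + g))
    (hle : ∀ f, w f ≤ μ f)
    (hfact1 : ∀ f : Polynomial K, w f < μ f → Q.degree ≤ f.degree)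
    (hfact2 : ∀ r : Polynomial K, r.degree < Q.degree → w r = μ r)
    (hfact3 : ∀ q : Polynomial K, q ≠ 0 → w (q * Q) < μ (q * Q))
    (f g : Polynomial K)
    (hdiv : ∃ h, w (f * g) < w (f * g - h * Q)) :
    (∃ h, w f < w (f - h * Q)) ∨ (∃ h, w g < w (g - h * Q)) :=
  stmt10_general μ w Q hQmonic hμ0 hμm hμa hw0 hwm hwa hle hfact2 hfact3 f g hdiv
end

section
/- Let {μ_α}_{α∈A} be a continued family of augmented iterated valuations of K[x] with limit key polynomial φ, and let μ be the limit augmented valuation μ = [(μ_α); μ(φ) = γ]. Suppose f ∈ K[x] is such that there exists α₀ ∈ A with μ_α(f) = μ(f) for all α ≥ α₀. Then there exists h ∈ K[x] with deg_x h < deg_x φ and in_μ f = in_μ h. (The h can be taken to be the remainder of Euclidean division of f by φ.) -/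
/-!
Write `f = r + φ q` with `deg r < deg φ`. If `in_μ f ≠ in_μ r`, then `μ(φ q) ≤ min (μ f) (μ r)`;
for large `α` both `f` and `r` have stabilized, so `μ(φ q) ≤ μ_α(φ q)`, and `μ_α φ < γ = μ φ`
forces `μ q < μ_α q`. But no polynomial `g` has `μ g < μ_α g` eventually: dividing such a `g`
by `φ`, either the remainder carries the value `μ g`, and is then `A`-divisible by `φ` although
its degree is smaller than `deg φ`, or the quotient has the same defect in smaller degree.
-/

open Polynomial Finset

section LimitAugmentation

open Filter

variable {R : Type*} {Γ : Type*} [AddCommGroup Γ] [LinearOrder Γ] [IsOrderedAddMonoid Γ]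

namespace AddValuation

def ofEqTopIff [Ring R] [Nontrivial R] (ν : R → WithTop Γ) (h0 : ∀ f, ν f = ⊤ ↔ f = 0)
    (hmul : ∀ f g, ν (f * g) = ν f + ν g) (hadd : ∀ f g, min (ν f) (ν g) ≤ ν (f + g)) :
    AddValuation R (WithTop Γ) :=
  .of ν ((h0 0).2 rfl)
    (by
      lift ν 1 to Γ using (h0 1).not.2 one_ne_zero with c hc
      have hcc : ((c + c : Γ) : WithTop Γ) = c := by rw [WithTop.coe_add, hc, ← hmul, one_mul]
      rw [WithTop.coe_inj, add_eq_left] at hcc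
      rw [hcc, WithTop.coe_zero])
    hadd hmul

variable [CommRing R] (v : AddValuation R (WithTop Γ))

theorem lt_map_of_le_map_add_mul {r φ q : R} {γ : Γ} {c : WithTop Γ} (hc : c ≠ ⊤)
    (hφ : v φ < γ) (hr : γ + c ≤ v r) (hg : γ + c ≤ v (r + φ * q)) : c < v q := by
  have hφq : γ + c ≤ v φ + v q := by
    rw [← map_mul, show φ * q = r + φ * q + -r by ring]
    exact (le_min hg (by rwa [map_neg])).trans (v.map_add _ _)
  exact lt_of_add_lt_add_left ((WithTop.add_lt_add_right hc hφ).trans_le hφq)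

end AddValuation

/-- `A`-divisibility of `f` by `φ`: for all `α` far enough along `l`, some `h` has
`in_{w α} f = in_{w α} (h * φ)`. -/
def EventuallyDvd [CommRing R] {ι : Type*} (l : Filter ι) (w : ι → AddValuation R[X] (WithTop Γ))
    (φ f : R[X]) : Prop :=
  ∀ᶠ α in l, ∃ h, f = h * φ ∨ w α f < w α (f - h * φ)

variable [CommRing R] [Nontrivial R] {ι : Type*} {l : Filter ι} [l.NeBot]
  (v : AddValuation R[X] (WithTop Γ)) (w : ι → AddValuation R[X] (WithTop Γ)) {φ : R[X]} {γ : Γ}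

theorem not_eventually_map_lt_map (hmonic : φ.Monic) (hφ : 0 < φ.degree) (hvφ : v φ = γ)
    (hγ : ∀ᶠ α in l, w α φ < γ)
    (hmin : ∀ f : R[X], f ≠ 0 → EventuallyDvd l w φ f → φ.degree ≤ f.degree)
    (hstab : ∀ g : R[X], g.degree < φ.degree → ∀ᶠ α in l, w α g = v g)
    (g : R[X]) : ¬ ∀ᶠ α in l, v g < w α g := by
  intro hbad
  set r := g %ₘ φ
  set q := g /ₘ φ
  have hg : r + φ * q = g := modByMonic_add_div g φ
  have hr := degree_modByMonic_lt g hmonic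
  rcases le_or_gt (v r) (v (φ * q)) with hle | hlt
  · have hrg : v r ≤ v g := hg ▸ (le_min le_rfl hle).trans (v.map_add _ _)
    have hlt : ∀ᶠ α in l, w α r < w α (r - -q * φ) := by
      filter_upwards [hbad, hstab r hr] with α hα hαr
      rw [hαr, show r - -q * φ = g by rw [← hg]; ring]
      exact hrg.trans_lt hα
    have hr0 : r ≠ 0 := by
      obtain ⟨α, hα⟩ := hlt.exists
      rintro hr0
      rw [hr0, (w α).map_zero] at hα
      exact not_top_lt hα
    exact (hmin r hr0 (hlt.mono fun α h => ⟨-q, .inr h⟩)).not_gt hr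
  · have hvg : v g = γ + v q := by rw [← hg, v.map_add_eq_of_lt_right hlt, v.map_mul, hvφ]
    have hq : q ≠ 0 := by
      rintro hq
      rw [hq, mul_zero, v.map_zero] at hlt
      exact not_top_lt hlt
    have hg0 : g ≠ 0 := by
      rintro rfl
      exact hq (zero_divByMonic φ)
    have hvq : v q ≠ ⊤ := by
      intro h
      rw [v.map_mul, h, add_top] at hlt
      exact not_top_lt hlt
    refine not_eventually_map_lt_map hmonic hφ hvφ hγ hmin hstab q ?_
    filter_upwards [hbad, hγ, hstab r hr] with α hα hαφ hαr
    refine (w α).lt_map_of_le_map_add_mul hvq hαφ ?_ (hg ▸ hvg ▸ hα.le)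
    rw [hαr, ← hvφ, ← v.map_mul]
    exact hlt.le
termination_by g.natDegree
decreasing_by exact natDegree_lt_natDegree hq (degree_divByMonic_lt g φ hg0 hφ)

theorem map_lt_map_sub_modByMonic (hmonic : φ.Monic) (hφ : 0 < φ.degree) (hvφ : v φ = γ)
    (hγ : ∀ᶠ α in l, w α φ < γ)
    (hmin : ∀ f : R[X], f ≠ 0 → EventuallyDvd l w φ f → φ.degree ≤ f.degree)
    (hstab : ∀ g : R[X], g.degree < φ.degree → ∀ᶠ α in l, w α g = v g)
    {f : R[X]} (hf : ∀ᶠ α in l, w α f = v f) (hvq : v (f /ₘ φ) ≠ ⊤) :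
    v f < v (f - f %ₘ φ) := by
  set r := f %ₘ φ
  set q := f /ₘ φ
  have hrq : r + φ * q = f := modByMonic_add_div f φ
  rw [show f - r = φ * q by rw [← hrq]; ring]
  by_contra! hle
  have hr : v (φ * q) ≤ v r := by
    by_contra! hlt
    have hvf : v f = v r := hrq ▸ v.map_add_eq_of_lt_left hlt
    exact (hvf ▸ hlt).not_ge hle
  refine not_eventually_map_lt_map v w hmonic hφ hvφ hγ hmin hstab q ?_
  filter_upwards [hf, hγ, hstab r (degree_modByMonic_lt f hmonic)] with α hαf hαφ hαr
  refine (w α).lt_map_of_le_map_add_mul (r := r) hvq hαφ ?_ ?_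
  · rwa [hαr, ← hvφ, ← v.map_mul]
  · rwa [hrq, hαf, ← hvφ, ← v.map_mul]

end LimitAugmentation

theorem stmt12_general {K : Type*} [Field K] {Γ : Type*} [AddCommGroup Γ] [LinearOrder Γ] [IsOrderedAddMonoid Γ]
    {A : Type*} [LinearOrder A]
    (μa : A → Polynomial K → WithTop Γ) (μ : Polynomial K → WithTop Γ)
    (φ : Polynomial K) (γ : Γ) (hmonic : φ.Monic)
    (hμa0 : ∀ α f, μa α f = ⊤ ↔ f = 0)
    (hμam : ∀ α f g, μa α (f * g) = μa α f + μa α g)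
    (hμaa : ∀ α f g, min (μa α f) (μa α g) ≤ μa α (f + g))
    (hμ0 : ∀ f, μ f = ⊤ ↔ f = 0)
    (hμm : ∀ f g, μ (f * g) = μ f + μ g)
    (hμadd : ∀ f g, min (μ f) (μ g) ≤ μ (f + g))
    (hγ : ∀ α, μa α φ < (γ : WithTop Γ)) (hμφ : μ φ = (γ : WithTop Γ))
    (hAmin : ∀ f : Polynomial K, f ≠ 0 →
      (∃ α₀, ∀ α ≥ α₀, ∃ h, f = h * φ ∨ μa α f < μa α (f - h * φ)) →
      φ.degree ≤ f.degree)
    (hsmallstab : ∀ g : Polynomial K, g.degree < φ.degree →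
      ∃ α₀, ∀ α ≥ α₀, μa α g = μ g)
    (f : Polynomial K)
    (hstab : ∃ α₀, ∀ α ≥ α₀, μa α f = μ f) :
    ∃ h : Polynomial K, h.degree < φ.degree ∧ (f = h ∨ μ f < μ (f - h)) := by
  obtain ⟨α₀, hα₀⟩ := hstab
  have : Nonempty A := ⟨α₀⟩
  let v := AddValuation.ofEqTopIff μ hμ0 hμm hμadd
  let w α := AddValuation.ofEqTopIff (μa α) (hμa0 α) (hμam α) (hμaa α)
  have hφ : 0 < φ.degree := hmonic.degree_pos.2 fun h1 =>
    (hγ α₀).ne (by rw [← hμφ, h1]; exact (w α₀).map_one.trans v.map_one.symm)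
  by_cases hq : f /ₘ φ = 0
  · exact ⟨f, (divByMonic_eq_zero_iff hmonic).1 hq, .inl rfl⟩
  refine ⟨f %ₘ φ, degree_modByMonic_lt f hmonic, .inr ?_⟩
  exact map_lt_map_sub_modByMonic v w hmonic hφ hμφ (.of_forall hγ)
    (fun g hg h => hAmin g hg (Filter.eventually_atTop.1 h))
    (fun g hg => Filter.eventually_atTop.2 (hsmallstab g hg))
    (Filter.eventually_atTop.2 ⟨α₀, hα₀⟩) (mt (hμ0 _).1 hq)

/-- Let `{μ_α}` be a continued family of augmented iterated valuations with
limit key polynomial `φ` and limit augmented valuation `μ = [(μ_α); μ(φ) = γ]`.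
If `f` satisfies `μ_α(f) = μ(f)` for all `α ≥ α₀`, then there is `h` with
`deg h < deg φ` and `in_μ f = in_μ h`. -/
theorem stmt12 {K : Type*} [Field K] {Γ : Type*} [AddCommGroup Γ] [LinearOrder Γ] [IsOrderedAddMonoid Γ]
    {A : Type*} [LinearOrder A]
    (μa : A → Polynomial K → WithTop Γ) (μ : Polynomial K → WithTop Γ)
    (φ : Polynomial K) (γ : Γ) (hmonic : φ.Monic)
    (hμa0 : ∀ α f, μa α f = ⊤ ↔ f = 0)
    (hμam : ∀ α f g, μa α (f * g) = μa α f + μa α g)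
    (hμaa : ∀ α f g, min (μa α f) (μa α g) ≤ μa α (f + g))
    (hμ0 : ∀ f, μ f = ⊤ ↔ f = 0)
    (hμm : ∀ f g, μ (f * g) = μ f + μ g)
    (hμadd : ∀ f g, min (μ f) (μ g) ≤ μ (f + g))
    (hmono : ∀ α β : A, α ≤ β → ∀ f, μa α f ≤ μa β f)
    (hγ : ∀ α, μa α φ < (γ : WithTop Γ)) (hμφ : μ φ = (γ : WithTop Γ))
    (hAmin : ∀ f : Polynomial K, f ≠ 0 →
      (∃ α₀, ∀ α ≥ α₀, ∃ h, f = h * φ ∨ μa α f < μa α (f - h * φ)) →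
      φ.degree ≤ f.degree)
    (hAirr : ∀ f g : Polynomial K,
      (∃ α₀, ∀ α ≥ α₀, ∃ h, f * g = h * φ ∨ μa α (f * g) < μa α (f * g - h * φ)) →
      (∃ α₀, ∀ α ≥ α₀, ∃ h, f = h * φ ∨ μa α f < μa α (f - h * φ)) ∨
      (∃ α₀, ∀ α ≥ α₀, ∃ h, g = h * φ ∨ μa α g < μa α (g - h * φ)))
    (hsmallstab : ∀ g : Polynomial K, g.degree < φ.degree →
      ∃ α₀, ∀ α ≥ α₀, μa α g = μ g)
    (haug : ∀ (m : ℕ) (fc : ℕ → Polynomial K), (∀ j, (fc j).degree < φ.degree) →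
      μ (∑ j ∈ range (m + 1), fc j * φ ^ j)
        = (range (m + 1)).inf fun j => μ (fc j) + ((j • γ : Γ) : WithTop Γ))
    (f : Polynomial K) (hf : f ≠ 0)
    (hstab : ∃ α₀, ∀ α ≥ α₀, μa α f = μ f) :
    ∃ h : Polynomial K, h.degree < φ.degree ∧ (f = h ∨ μ f < μ (f - h)) :=
  stmt12_general μa μ φ γ hmonic hμa0 hμam hμaa hμ0 hμm hμadd hγ hμφ hAmin hsmallstab f hstab
end
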